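/- Let n ≥ 6 and 3 ≤ k ≤ n−2, and let T be a tree on n vertices with exactly k segments (equivalently, with exactly n − k − 1 vertices of degree 2). Then R⁰_α(T) ≤ 2^α n + k^α − (2^α − 1)k − 2^α if α < 0 or α > 1, and R⁰_α(T) ≥ 2^α n + k^α − (2^α − 1)k − 2^α if 0 < α < 1; moreover SEI_a(T) ≤ 2a²n + k·a^k − (2a − 1)ak − 2a² for every real a > 1. Equality holds in any of these inequalities if and only if T has exactly one vertex of degree k, exactly n − k − 1 vertices of degree 2, and exactly k vertices of degree 1. -/

import Mathlib

/-!
In a tree with `n` vertices of which `n - k - 1` have degree 2, the other `k + 1` vertices have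
degrees `≥ 1` summing to `2k` by the handshake lemma, so each of these degrees lies in `[1, k]`.
For `f` strictly convex on `[1, k]`, `f d` lies below the chord through `(1, f 1)` and `(k, f k)`,
and summing the chord over these `k + 1` degrees gives exactly `k f(1) + f(k)`; equality forces
every degree into `{1, k}`, which by the degree count means one vertex of degree `k` and `k` leaves.
The indices are `∑ f(d_v)` for `f x = x ^ α` (`α < 0` or `α > 1`),
`f x = -x ^ α` (`0 < α < 1`) and `f x = x a ^ x` (`a > 1`).
-/

open Finset Real

/-- The degree of a vertex `v` in a graph `G` (number of neighbours). -/
noncomputable def deg {n : ℕ} (G : SimpleGraph (Fin n)) (v : Fin n) : ℕ :=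
  Nat.card (G.neighborSet v)

/-- The zeroth-order general Randć index `R⁰_α(G) = Σ_v (d_v)^α`. -/
noncomputable def R0 {n : ℕ} (G : SimpleGraph (Fin n)) (α : ℝ) : ℝ :=
  ∑ v : Fin n, (deg G v : ℝ) ^ α

/-- The variable sum exdeg index `SEI_a(G) = Σ_v d_v · a^{d_v}`. -/
noncomputable def SEI {n : ℕ} (G : SimpleGraph (Fin n)) (a : ℝ) : ℝ :=
  ∑ v : Fin n, (deg G v : ℝ) * a ^ (deg G v)

/-- The number of vertices of `G` having degree `d`. -/
noncomputable def countDeg {n : ℕ} (G : SimpleGraph (Fin n)) (d : ℕ) : ℕ :=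
  Nat.card {v : Fin n // deg G v = d}

/-- The number of branching vertices (vertices of degree greater than 2) of `G`. -/
noncomputable def branching {n : ℕ} (G : SimpleGraph (Fin n)) : ℕ :=
  Nat.card {v : Fin n // 2 < deg G v}

lemma strictConvexOn_rpow_of_neg {p : ℝ} (hp : p < 0) :
    StrictConvexOn ℝ (Set.Ioi 0) fun x : ℝ ↦ x ^ p := by
  refine strictConvexOn_of_deriv2_pos' (convex_Ioi 0)
    (fun x hx ↦ (continuousAt_rpow_const x p (.inl (ne_of_gt hx))).continuousWithinAt)
    fun x (hx : 0 < x) ↦ ?_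
  rw [iter_deriv_rpow_const, show (descPochhammer ℝ 2).eval p = p * (p - 1) by
    simp [descPochhammer_succ_right]]
  exact mul_pos (mul_pos_of_neg_of_neg hp (by linarith)) (rpow_pos_of_pos hx _)

lemma strictConvexOn_rpow_left {b : ℝ} (hb₀ : 0 < b) (hb₁ : b ≠ 1) :
    StrictConvexOn ℝ Set.univ fun x : ℝ ↦ b ^ x := by
  refine ⟨convex_univ, fun x _ y _ hxy s t hs ht hst ↦ ?_⟩
  have hlog : log b ≠ 0 := log_ne_zero_of_pos_of_ne_one hb₀ hb₁
  have := strictConvexOn_exp.2 (Set.mem_univ (log b * x)) (Set.mem_univ (log b * y))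
    (by simpa [hlog] using hxy) hs ht hst
  simpa only [rpow_def_of_pos hb₀, smul_eq_mul, mul_add, mul_left_comm] using this

/-- `x b ^ x = b ^ x + (x - 1) b ^ x`: a strictly convex function plus a product of two
nonnegative monotone convex functions. -/
lemma strictConvexOn_mul_rpow_left {b : ℝ} (hb : 1 < b) :
    StrictConvexOn ℝ (Set.Ici 1) fun x : ℝ ↦ x * b ^ x := by
  have hb₀ : 0 < b := by linarith
  have hmono : MonotoneOn (fun x : ℝ ↦ b ^ x) (Set.Ici 1) :=
    (monotone_rpow_of_base_ge_one hb.le).monotoneOn _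
  have hconv : ConvexOn ℝ (Set.Ici (1 : ℝ)) ((fun x : ℝ ↦ x - 1) * fun x : ℝ ↦ b ^ x) :=
    ((convexOn_id (convex_Ici 1)).sub (concaveOn_const 1 (convex_Ici 1))).mul
      ((convexOn_rpow_left hb₀).subset (Set.subset_univ _) (convex_Ici 1))
      (fun x (hx : 1 ≤ x) ↦ sub_nonneg.2 hx) (fun x _ ↦ (rpow_pos_of_pos hb₀ x).le)
      (MonotoneOn.monovaryOn (fun x _ y _ h ↦ by simpa using h) hmono)
  refine (((strictConvexOn_rpow_left hb₀ hb.ne').subset (Set.subset_univ _)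
    (convex_Ici 1)).add_convexOn hconv).congr fun x _ ↦ ?_
  simp only [Pi.add_apply, Pi.mul_apply]
  ring

section Chord

variable {s : Set ℝ} {f : ℝ → ℝ} {a b x : ℝ}

theorem StrictConvexOn.mul_eq_chord_iff (hf : StrictConvexOn ℝ s f) (ha : a ∈ s) (hb : b ∈ s)
    (hax : a ≤ x) (hxb : x ≤ b) :
    (b - a) * f x = (b - x) * f a + (x - a) * f b ↔ x = a ∨ x = b := by
  refine ⟨fun h ↦ ?_, by rintro (rfl | rfl) <;> ring⟩
  by_contra! hne
  exact (hf.secant_strict_mono_aux1 ha hb (hax.lt_of_ne' hne.1) (hxb.lt_of_ne hne.2)).ne h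

theorem StrictConvexOn.mul_le_chord (hf : StrictConvexOn ℝ s f) (ha : a ∈ s) (hb : b ∈ s)
    (hax : a ≤ x) (hxb : x ≤ b) :
    (b - a) * f x ≤ (b - x) * f a + (x - a) * f b := by
  by_cases hend : x = a ∨ x = b
  · exact ((hf.mul_eq_chord_iff ha hb hax hxb).2 hend).le
  rw [not_or] at hend
  exact (hf.secant_strict_mono_aux1 ha hb (hax.lt_of_ne' hend.1) (hxb.lt_of_ne hend.2)).le

end Chord

section DegreeSequence

variable {ι : Type*} {S : Finset ι} {d : ι → ℕ} {k : ℕ}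

lemma le_of_sum_eq_of_one_le (hd : ∀ v ∈ S, 1 ≤ d v) (hcard : #S = k + 1)
    (hsum : ∑ v ∈ S, d v = 2 * k) {v : ι} (hv : v ∈ S) : d v ≤ k := by
  classical
  have hrest : #(S.erase v) • 1 ≤ ∑ u ∈ S.erase v, d u :=
    card_nsmul_le_sum _ _ _ fun u hu ↦ hd u (mem_of_mem_erase hu)
  rw [← add_sum_erase S d hv] at hsum
  rw [card_erase_of_mem hv, hcard, smul_eq_mul, mul_one] at hrest
  omega

theorem sum_le_of_strictConvexOn {f : ℝ → ℝ} (hf : StrictConvexOn ℝ (Set.Icc 1 (k : ℝ)) f)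
    (hk : 2 ≤ k) (hd : ∀ v ∈ S, 1 ≤ d v) (hcard : #S = k + 1)
    (hsum : ∑ v ∈ S, d v = 2 * k) :
    ∑ v ∈ S, f (d v) ≤ k * f 1 + f k ∧
      (∑ v ∈ S, f (d v) = k * f 1 + f k ↔ ∀ v ∈ S, d v = 1 ∨ d v = k) := by
  have hk1 : (0 : ℝ) < k - 1 := by
    have : (2 : ℝ) ≤ k := by exact_mod_cast hk
    linarith
  have h1k : (1 : ℝ) ∈ Set.Icc 1 (k : ℝ) := ⟨le_rfl, by linarith⟩
  have hkk : (k : ℝ) ∈ Set.Icc 1 (k : ℝ) := ⟨by linarith, le_rfl⟩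
  have hrange : ∀ v ∈ S, 1 ≤ (d v : ℝ) ∧ (d v : ℝ) ≤ k := fun v hv ↦
    ⟨by exact_mod_cast hd v hv, by exact_mod_cast le_of_sum_eq_of_one_le hd hcard hsum hv⟩
  have hchord : ∀ v ∈ S, (k - 1) * f (d v) ≤ (k - d v) * f 1 + (d v - 1) * f k := fun v hv ↦
    hf.mul_le_chord h1k hkk (hrange v hv).1 (hrange v hv).2
  have hchord_sum :
      ∑ v ∈ S, ((k - d v) * f 1 + (d v - 1) * f k) = (k - 1) * (k * f 1 + f k) := by
    have : ∑ v ∈ S, (d v : ℝ) = 2 * k := by exact_mod_cast hsum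
    simp only [sum_add_distrib, ← sum_mul, sum_sub_distrib, sum_const, hcard, this, nsmul_eq_mul]
    push_cast
    ring
  rw [← mul_le_mul_iff_right₀ hk1, ← (mul_right_injective₀ hk1.ne').eq_iff, mul_sum,
    ← hchord_sum, sum_eq_sum_iff_of_le hchord]
  refine ⟨sum_le_sum hchord, forall₂_congr fun v hv ↦ ?_⟩
  rw [hf.mul_eq_chord_iff h1k hkk (hrange v hv).1 (hrange v hv).2]
  norm_cast

theorem forall_eq_one_or_eq_iff_card (hk : 2 ≤ k) (hcard : #S = k + 1)
    (hsum : ∑ v ∈ S, d v = 2 * k) :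
    (∀ v ∈ S, d v = 1 ∨ d v = k) ↔
      #{v ∈ S | d v = k} = 1 ∧ #{v ∈ S | d v = 1} = k := by
  classical
  have hsplit := card_filter_add_card_filter_not (s := S) (fun v ↦ d v = k)
  constructor
  · intro h
    have hrest : {v ∈ S | ¬d v = k} = {v ∈ S | d v = 1} :=
      filter_congr fun v hv ↦ by have := h v hv; omega
    have hdeg := sum_filter_add_sum_filter_not S (fun v ↦ d v = k) d
    rw [sum_congr rfl fun v hv ↦ (mem_filter.1 hv).2, hrest,
      sum_congr rfl fun v hv ↦ (mem_filter.1 hv).2, sum_const, sum_const, hsum] at hdeg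
    rw [hrest, hcard] at hsplit
    simp only [smul_eq_mul, mul_one] at hdeg
    constructor <;> nlinarith
  · rintro ⟨hA, hB⟩
    have hunion : #{v ∈ S | d v = 1 ∨ d v = k} = #S := by
      rw [filter_or, card_union_of_disjoint (disjoint_filter.2 fun v _ h ↦ by omega), hA, hB,
        hcard]
    exact card_filter_eq_iff.1 hunion

end DegreeSequence

lemma deg_eq_degree {n : ℕ} (G : SimpleGraph (Fin n)) [DecidableRel G.Adj] (v : Fin n) :
    deg G v = G.degree v := by
  rw [deg, Nat.card_eq_fintype_card, SimpleGraph.card_neighborSet_eq_degree]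

lemma countDeg_eq_card_filter {n : ℕ} (G : SimpleGraph (Fin n)) (d : ℕ) :
    countDeg G d = #{v | deg G v = d} := by
  rw [countDeg, Nat.card_eq_fintype_card, Fintype.card_subtype]

namespace SimpleGraph.IsTree

variable {n : ℕ} {T : SimpleGraph (Fin n)}

lemma one_le_deg (hT : T.IsTree) (hn : 2 ≤ n) (v : Fin n) : 1 ≤ deg T v := by
  classical
  have : Nontrivial (Fin n) := Fin.nontrivial_iff_two_le.2 hn
  rw [deg_eq_degree]
  exact hT.connected.preconnected.degree_pos_of_nontrivial v

lemma sum_deg (hT : T.IsTree) : ∑ v, deg T v = 2 * (n - 1) := by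
  classical
  have := hT.card_edgeFinset
  simp only [deg_eq_degree, sum_degrees_eq_twice_card_edges, Fintype.card_fin] at *
  omega

theorem sum_deg_le_of_strictConvexOn (hT : T.IsTree) {k : ℕ} (hk : 3 ≤ k) (hkn : k < n)
    (hseg : countDeg T 2 = n - k - 1) {f : ℝ → ℝ}
    (hf : StrictConvexOn ℝ (Set.Icc 1 (k : ℝ)) f) :
    ∑ v, f (deg T v) ≤ (n - k - 1) * f 2 + (k * f 1 + f k) ∧
      (∑ v, f (deg T v) = (n - k - 1) * f 2 + (k * f 1 + f k) ↔
        countDeg T k = 1 ∧ countDeg T 1 = k) := by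
  rw [countDeg_eq_card_filter] at hseg
  set S : Finset (Fin n) := {v | ¬deg T v = 2} with hS
  have hcard : #S = k + 1 := by
    have := card_filter_add_card_filter_not (s := univ) (fun v ↦ deg T v = 2)
    rw [← hS, card_univ, Fintype.card_fin, hseg] at this
    omega
  have hsum : ∑ v ∈ S, deg T v = 2 * k := by
    have := sum_filter_add_sum_filter_not univ (fun v ↦ deg T v = 2) (deg T)
    rw [← hS, sum_congr rfl fun v hv ↦ (mem_filter.1 hv).2, sum_const, hseg, hT.sum_deg,
      smul_eq_mul] at this
    omega
  have hsplit : ∑ v, f (deg T v) = (n - k - 1) * f 2 + ∑ v ∈ S, f (deg T v) := by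
    rw [← sum_filter_add_sum_filter_not univ (fun v ↦ deg T v = 2), ← hS,
      sum_congr rfl fun v hv ↦ by rw [(mem_filter.1 hv).2], sum_const, hseg, nsmul_eq_mul,
      Nat.cast_sub (by omega), Nat.cast_sub (by omega)]
    push_cast
    ring
  have hcount : ∀ m ≠ 2, countDeg T m = #{v ∈ S | deg T v = m} := fun m hm ↦ by
    rw [countDeg_eq_card_filter, hS, filter_filter]
    exact congrArg card (filter_congr fun v _ ↦ by omega)
  obtain ⟨hle, heq⟩ := sum_le_of_strictConvexOn hf (by omega)
    (fun v _ ↦ hT.one_le_deg (by omega) v) hcard hsum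
  rw [hsplit, add_le_add_iff_left, add_right_inj, heq,
    forall_eq_one_or_eq_iff_card (by omega) hcard hsum, hcount k (by omega), hcount 1 (by omega)]
  exact ⟨hle, Iff.rfl⟩

end SimpleGraph.IsTree

section Indices

variable {n k : ℕ} {T : SimpleGraph (Fin n)}

theorem R0_le_of_isTree (hT : T.IsTree) (hk : 3 ≤ k) (hkn : k < n)
    (hseg : countDeg T 2 = n - k - 1) {α : ℝ} (hα : α < 0 ∨ 1 < α) :
    R0 T α ≤ 2 ^ α * n + k ^ α - (2 ^ α - 1) * k - 2 ^ α ∧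
      (R0 T α = 2 ^ α * n + k ^ α - (2 ^ α - 1) * k - 2 ^ α ↔
        countDeg T k = 1 ∧ countDeg T 1 = k) := by
  have hsub : Set.Icc 1 (k : ℝ) ⊆ Set.Ioi 0 := fun x hx ↦ lt_of_lt_of_le one_pos hx.1
  have hf : StrictConvexOn ℝ (Set.Icc 1 (k : ℝ)) fun x ↦ x ^ α := hα.elim
    (fun hα ↦ (strictConvexOn_rpow_of_neg hα).subset hsub (convex_Icc _ _))
    (fun hα ↦ (strictConvexOn_rpow hα).subset (hsub.trans Set.Ioi_subset_Ici_self)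
      (convex_Icc _ _))
  have hrhs : (n - k - 1) * (2 : ℝ) ^ α + (k * 1 ^ α + k ^ α) =
      2 ^ α * n + k ^ α - (2 ^ α - 1) * k - 2 ^ α := by
    rw [one_rpow]; ring
  rw [← hrhs]
  exact hT.sum_deg_le_of_strictConvexOn hk hkn hseg hf

theorem R0_ge_of_isTree (hT : T.IsTree) (hk : 3 ≤ k) (hkn : k < n)
    (hseg : countDeg T 2 = n - k - 1) {α : ℝ} (hα₀ : 0 < α) (hα₁ : α < 1) :
    2 ^ α * n + k ^ α - (2 ^ α - 1) * k - 2 ^ α ≤ R0 T α ∧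
      (R0 T α = 2 ^ α * n + k ^ α - (2 ^ α - 1) * k - 2 ^ α ↔
        countDeg T k = 1 ∧ countDeg T 1 = k) := by
  have hf : StrictConvexOn ℝ (Set.Icc 1 (k : ℝ)) fun x ↦ -x ^ α :=
    (strictConcaveOn_rpow hα₀ hα₁).neg.subset (fun x hx ↦ zero_le_one.trans hx.1)
      (convex_Icc _ _)
  have hrhs : (n - k - 1) * -(2 : ℝ) ^ α + (k * -1 ^ α + -k ^ α) =
      -(2 ^ α * n + k ^ α - (2 ^ α - 1) * k - 2 ^ α) := by
    rw [one_rpow]; ring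
  have key := hT.sum_deg_le_of_strictConvexOn hk hkn hseg hf
  rwa [hrhs, sum_neg_distrib, neg_le_neg_iff, neg_inj] at key

theorem SEI_le_of_isTree (hT : T.IsTree) (hk : 3 ≤ k) (hkn : k < n)
    (hseg : countDeg T 2 = n - k - 1) {a : ℝ} (ha : 1 < a) :
    SEI T a ≤ 2 * a ^ 2 * n + k * a ^ k - (2 * a - 1) * a * k - 2 * a ^ 2 ∧
      (SEI T a = 2 * a ^ 2 * n + k * a ^ k - (2 * a - 1) * a * k - 2 * a ^ 2 ↔
        countDeg T k = 1 ∧ countDeg T 1 = k) := by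
  have hf : StrictConvexOn ℝ (Set.Icc 1 (k : ℝ)) fun x ↦ x * a ^ x :=
    (strictConvexOn_mul_rpow_left ha).subset Set.Icc_subset_Ici_self (convex_Icc _ _)
  have key := hT.sum_deg_le_of_strictConvexOn hk hkn hseg hf
  simp only [rpow_two, rpow_one, rpow_natCast] at key
  have hrhs : (n - k - 1) * (2 * a ^ 2) + (k * (1 * a) + k * a ^ k) =
      2 * a ^ 2 * n + k * a ^ k - (2 * a - 1) * a * k - 2 * a ^ 2 := by
    ring
  rwa [hrhs] at key

end Indices

theorem stmt14_general (n k : ℕ) (hkl : 3 ≤ k) (hku : k ≤ n - 2)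
    (T : SimpleGraph (Fin n)) (hT : T.IsTree) (hseg : countDeg T 2 = n - k - 1) :
    (∀ α : ℝ, (α < 0 ∨ 1 < α) →
      R0 T α ≤ (2 : ℝ) ^ α * (n : ℝ) + (k : ℝ) ^ α - ((2 : ℝ) ^ α - 1) * (k : ℝ) -
        (2 : ℝ) ^ α ∧
      (R0 T α = (2 : ℝ) ^ α * (n : ℝ) + (k : ℝ) ^ α - ((2 : ℝ) ^ α - 1) * (k : ℝ) -
        (2 : ℝ) ^ α ↔
        (countDeg T k = 1 ∧ countDeg T 2 = n - k - 1 ∧ countDeg T 1 = k))) ∧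
    (∀ α : ℝ, 0 < α → α < 1 →
      R0 T α ≥ (2 : ℝ) ^ α * (n : ℝ) + (k : ℝ) ^ α - ((2 : ℝ) ^ α - 1) * (k : ℝ) -
        (2 : ℝ) ^ α ∧
      (R0 T α = (2 : ℝ) ^ α * (n : ℝ) + (k : ℝ) ^ α - ((2 : ℝ) ^ α - 1) * (k : ℝ) -
        (2 : ℝ) ^ α ↔
        (countDeg T k = 1 ∧ countDeg T 2 = n - k - 1 ∧ countDeg T 1 = k))) ∧
    (∀ a : ℝ, 1 < a →
      SEI T a ≤ 2 * a ^ 2 * (n : ℝ) + (k : ℝ) * a ^ k - (2 * a - 1) * a * (k : ℝ) -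
        2 * a ^ 2 ∧
      (SEI T a = 2 * a ^ 2 * (n : ℝ) + (k : ℝ) * a ^ k - (2 * a - 1) * a * (k : ℝ) -
        2 * a ^ 2 ↔
        (countDeg T k = 1 ∧ countDeg T 2 = n - k - 1 ∧ countDeg T 1 = k))) := by
  have hkn : k < n := by omega
  have hext : countDeg T k = 1 ∧ countDeg T 1 = k ↔
      countDeg T k = 1 ∧ countDeg T 2 = n - k - 1 ∧ countDeg T 1 = k := by
    simp only [hseg, true_and]
  refine ⟨fun α hα ↦ ?_, fun α hα₀ hα₁ ↦ ?_, fun a ha ↦ ?_⟩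
  · obtain ⟨hle, heq⟩ := R0_le_of_isTree hT hkl hkn hseg hα
    exact ⟨hle, heq.trans hext⟩
  · obtain ⟨hle, heq⟩ := R0_ge_of_isTree hT hkl hkn hseg hα₀ hα₁
    exact ⟨hle, heq.trans hext⟩
  · obtain ⟨hle, heq⟩ := SEI_le_of_isTree hT hkl hkn hseg ha
    exact ⟨hle, heq.trans hext⟩

theorem stmt14 (n k : ℕ) (hn : 6 ≤ n) (hkl : 3 ≤ k) (hku : k ≤ n - 2)
    (T : SimpleGraph (Fin n)) (hT : T.IsTree) (hseg : countDeg T 2 = n - k - 1) :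
    (∀ α : ℝ, (α < 0 ∨ 1 < α) →
      R0 T α ≤ (2 : ℝ) ^ α * (n : ℝ) + (k : ℝ) ^ α - ((2 : ℝ) ^ α - 1) * (k : ℝ) -
        (2 : ℝ) ^ α ∧
      (R0 T α = (2 : ℝ) ^ α * (n : ℝ) + (k : ℝ) ^ α - ((2 : ℝ) ^ α - 1) * (k : ℝ) -
        (2 : ℝ) ^ α ↔
        (countDeg T k = 1 ∧ countDeg T 2 = n - k - 1 ∧ countDeg T 1 = k))) ∧
    (∀ α : ℝ, 0 < α → α < 1 →
      R0 T α ≥ (2 : ℝ) ^ α * (n : ℝ) + (k : ℝ) ^ α - ((2 : ℝ) ^ α - 1) * (k : ℝ) -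
        (2 : ℝ) ^ α ∧
      (R0 T α = (2 : ℝ) ^ α * (n : ℝ) + (k : ℝ) ^ α - ((2 : ℝ) ^ α - 1) * (k : ℝ) -
        (2 : ℝ) ^ α ↔
        (countDeg T k = 1 ∧ countDeg T 2 = n - k - 1 ∧ countDeg T 1 = k))) ∧
    (∀ a : ℝ, 1 < a →
      SEI T a ≤ 2 * a ^ 2 * (n : ℝ) + (k : ℝ) * a ^ k - (2 * a - 1) * a * (k : ℝ) -
        2 * a ^ 2 ∧
      (SEI T a = 2 * a ^ 2 * (n : ℝ) + (k : ℝ) * a ^ k - (2 * a - 1) * a * (k : ℝ) -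
        2 * a ^ 2 ↔
        (countDeg T k = 1 ∧ countDeg T 2 = n - k - 1 ∧ countDeg T 1 = k))) :=
  stmt14_general n k hkl hku T hT hseg
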